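/- There exists a universal constant C' > 0 with the following property. Let f^{(1)}, …, f^{(m)} ∈ ℝ^n be the frequency vectors of an insertion-only stream, let δ ∈ (0,1), let Z_1, …, Z_n be i.i.d. Rademacher random variables, and set X_t = ∑_{j=1}^n Z_j f_j^{(t)}. Then with probability at least 1 − δ, |X_t| ≤ (C'/δ) ‖f^{(m)}‖₂ simultaneously for all t ∈ [m]. -/

import Mathlib

open MeasureTheory ProbabilityTheory
open scoped ENNReal

/-- The Euclidean (ℓ₂) norm of a vector in ℝ^k. -/
noncomputable def l2norm {k : ℕ} (x : Fin k → ℝ) : ℝ := Real.sqrt (∑ i, (x i) ^ 2)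

/-- The frequency vector at time `t` of the insertion-only stream `p` over universe `[n]`. -/
noncomputable def freq {n m : ℕ} (p : Fin m → Fin n) (t : ℕ) : Fin n → ℝ :=
  fun j => ((Finset.univ.filter fun t' : Fin m => (t' : ℕ) < t ∧ p t' = j).card : ℝ)

/-- The law of a Rademacher random variable: uniform on `{-1, +1}`. -/
noncomputable def radMeasure : Measure ℝ :=
  (2⁻¹ : ℝ≥0∞) • Measure.dirac (1 : ℝ) + (2⁻¹ : ℝ≥0∞) • Measure.dirac (-1 : ℝ)

/-!
Chaining along the clock `V(t) = ‖f^(t)‖₂²`. Frequencies only grow, so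
`‖f^(t) - f^(s)‖₂² ≤ V(t) - V(s)` for `s ≤ t`, and every arrival raises `V` by at least one.
A Rademacher sum `∑ⱼ Zⱼ aⱼ` has fourth moment at most `3 ‖a‖₂⁴`, so it exceeds `r` with
probability at most `3 ‖a‖₂⁴ / r⁴`.

At level `k` the range `[0, V(m)]` is cut into `2 ^ k` cells, and each time is approximated
by the last time of its cell. Consecutive approximations differ by one arrival plus an
increment of `V`-length below `V(m) / 2 ^ (k + 1)`. The `O(2 ^ k)` links of level `k` get
threshold `R / 16 * (7 / 8) ^ k`, so the union bound for that level costs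
`O((V(m) / R²)² (2048 / 2401) ^ k)`, a convergent series. Once the cells have width at most
one, every time is its own approximation, and `R = 100 ‖f^(m)‖₂ / δ` makes the total failure
probability `O(δ⁴) ≤ δ`.
-/

section Rademacher

variable {Ω : Type*} [MeasurableSpace Ω] {μ : Measure Ω}

lemma ae_sq_eq_one_radMeasure : ∀ᵐ x ∂radMeasure, x ^ 2 = 1 := by
  refine ae_add_measure_iff.2 ⟨Measure.ae_smul_measure ?_ _, Measure.ae_smul_measure ?_ _⟩ <;>
    simp

lemma integral_id_radMeasure : ∫ x, x ∂radMeasure = 0 := by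
  rw [radMeasure, integral_add_measure, integral_smul_measure, integral_smul_measure,
    integral_dirac, integral_dirac]
  · norm_num
  all_goals exact (integrable_dirac (by simp)).smul_measure (by simp)

variable {W : Ω → ℝ}

lemma ae_sq_eq_one_of_map_eq_radMeasure (hW : Measurable W) (h : μ.map W = radMeasure) :
    ∀ᵐ ω ∂μ, W ω ^ 2 = 1 :=
  (ae_map_iff hW.aemeasurable (measurableSet_eq_fun (by fun_prop) (by fun_prop))).mp
    (h ▸ ae_sq_eq_one_radMeasure)

lemma integral_eq_zero_of_map_eq_radMeasure (hW : Measurable W) (h : μ.map W = radMeasure) :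
    ∫ ω, W ω ∂μ = 0 := by
  rw [← integral_id_radMeasure, ← h,
    integral_map (f := fun x => x) hW.aemeasurable aestronglyMeasurable_id]

end Rademacher

section FourthMoment

variable {Ω : Type*} [MeasurableSpace Ω] {μ : Measure Ω}

lemma memLp_top_of_ae_sq_eq {Y : Ω → ℝ} {c : ℝ} (hY : Measurable Y)
    (hY2 : ∀ᵐ ω ∂μ, Y ω ^ 2 = c) : MemLp Y ⊤ μ :=
  memLp_top_of_bound hY.aestronglyMeasurable (√c) <| hY2.mono fun ω h => by
    rw [Real.norm_eq_abs, ← h, Real.sqrt_sq_eq_abs]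

lemma memLp_top_pow [IsFiniteMeasure μ] {f : Ω → ℝ} (hf : MemLp f ⊤ μ) (k : ℕ) :
    MemLp (fun ω => f ω ^ k) ⊤ μ := by
  induction k with
  | zero => simpa using memLp_const (1 : ℝ)
  | succ k ih => simpa [pow_succ] using hf.mul' ih

variable [IsProbabilityMeasure μ]

/-- By independence the odd powers of `Y` average out against `T`, and `Y ^ 2 = c` turns the
even ones into constants. -/
lemma integral_add_pow_of_indepFun {T Y : Ω → ℝ} {c : ℝ} (hT : Measurable T)
    (hTb : MemLp T ⊤ μ) (hY : Measurable Y) (hY2 : ∀ᵐ ω ∂μ, Y ω ^ 2 = c)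
    (hY0 : ∫ ω, Y ω ∂μ = 0) (hTY : IndepFun T Y μ) :
    ∫ ω, (T ω + Y ω) ^ 2 ∂μ = ∫ ω, T ω ^ 2 ∂μ + c ∧
      ∫ ω, (T ω + Y ω) ^ 4 ∂μ = ∫ ω, T ω ^ 4 ∂μ + 6 * c * ∫ ω, T ω ^ 2 ∂μ + c ^ 2 := by
  have hpow : ∀ k : ℕ, MemLp (fun ω => T ω ^ k) ⊤ μ := memLp_top_pow hTb
  have hTk : ∀ k : ℕ, Integrable (fun ω => T ω ^ k) μ := fun k => (hpow k).integrable le_top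
  have hTkY : ∀ k : ℕ, Integrable (fun ω => T ω ^ k * Y ω) μ := fun k =>
    ((memLp_top_of_ae_sq_eq hY hY2).mul' (hpow k)).integrable le_top
  have hodd : ∀ k : ℕ, ∫ ω, T ω ^ k * Y ω ∂μ = 0 := fun k => by
    simpa [hY0] using (hTY.comp (measurable_id.pow_const k) measurable_id
      ).integral_fun_mul_eq_mul_integral (hT.pow_const k).aestronglyMeasurable
        hY.aestronglyMeasurable
  constructor
  · have h2 : (fun ω => (T ω + Y ω) ^ 2) =ᵐ[μ]
        fun ω => T ω ^ 2 + c + 2 * (T ω ^ 1 * Y ω) :=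
      hY2.mono fun ω h => by linear_combination h
    rw [integral_congr_ae h2, integral_add ((hTk 2).fun_add (integrable_const c))
      ((hTkY 1).const_mul 2), integral_add (hTk 2) (integrable_const c), integral_const_mul,
      hodd]
    simp
  · have h4 : (fun ω => (T ω + Y ω) ^ 4) =ᵐ[μ] fun ω =>
        T ω ^ 4 + 6 * c * T ω ^ 2 + c ^ 2 + (4 * (T ω ^ 3 * Y ω) + 4 * c * (T ω ^ 1 * Y ω)) :=
      hY2.mono fun ω h => by
        linear_combination (6 * T ω ^ 2 + 4 * T ω * Y ω + Y ω ^ 2 + c) * h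
    rw [integral_congr_ae h4,
      integral_add (((hTk 4).fun_add ((hTk 2).const_mul _)).fun_add (integrable_const _))
        (((hTkY 3).const_mul 4).fun_add ((hTkY 1).const_mul _)),
      integral_add ((hTk 4).fun_add ((hTk 2).const_mul _)) (integrable_const _),
      integral_add (hTk 4) ((hTk 2).const_mul _),
      integral_add ((hTkY 3).const_mul 4) ((hTkY 1).const_mul _),
      integral_const_mul, integral_const_mul, integral_const_mul, hodd, hodd]
    simp

variable {ι : Type*} {W : ι → Ω → ℝ} {c : ι → ℝ}

lemma integral_sum_sq_and_pow_four_le (hW : ∀ i, Measurable (W i)) (hind : iIndepFun W μ)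
    (hW2 : ∀ i, ∀ᵐ ω ∂μ, W i ω ^ 2 = c i) (hW0 : ∀ i, ∫ ω, W i ω ∂μ = 0) (s : Finset ι) :
    ∫ ω, (∑ i ∈ s, W i ω) ^ 2 ∂μ = ∑ i ∈ s, c i ∧
      ∫ ω, (∑ i ∈ s, W i ω) ^ 4 ∂μ ≤ 3 * (∑ i ∈ s, c i) ^ 2 := by
  classical
  induction s using Finset.induction_on with
  | empty => simp
  | @insert i s hi ih =>
    have hTY : IndepFun (fun ω => ∑ j ∈ s, W j ω) (W i) μ := by
      convert hind.indepFun_finsetSum_of_notMem hW hi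
      simp
    obtain ⟨h2, h4⟩ := integral_add_pow_of_indepFun (Finset.measurable_sum s fun j _ => hW j)
      (memLp_finsetSum s fun j _ => memLp_top_of_ae_sq_eq (hW j) (hW2 j)) (hW i) (hW2 i) (hW0 i)
      hTY
    have hc : 0 ≤ c i := by
      obtain ⟨ω, hω⟩ := (hW2 i).exists
      exact hω ▸ sq_nonneg _
    simp only [Finset.sum_insert hi, add_comm (W i _)]
    refine ⟨by rw [h2, ih.1, add_comm], ?_⟩
    rw [h4, ih.1]
    nlinarith [ih.2]

end FourthMoment

section Tail

variable {Ω : Type*} [MeasurableSpace Ω] {μ : Measure Ω} [IsProbabilityMeasure μ]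

lemma measure_lt_abs_le_integral_pow_four {Y : Ω → ℝ}
    (hY : Integrable (fun ω => Y ω ^ 4) μ) {r : ℝ} (hr : 0 < r) :
    μ {ω | r < |Y ω|} ≤ ENNReal.ofReal ((∫ ω, Y ω ^ 4 ∂μ) / r ^ 4) := by
  have hsub : {ω | r < |Y ω|} ⊆ {ω | r ^ 4 ≤ Y ω ^ 4} := fun ω (h : r < |Y ω|) =>
    show r ^ 4 ≤ Y ω ^ 4 from
      Even.pow_abs (by decide : Even 4) (Y ω) ▸ pow_le_pow_left₀ hr.le h.le 4
  have hmarkov := mul_meas_ge_le_integral_of_nonneg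
    (ae_of_all μ fun ω => by positivity : 0 ≤ᵐ[μ] fun ω => Y ω ^ 4) hY (r ^ 4)
  calc μ {ω | r < |Y ω|} ≤ μ {ω | r ^ 4 ≤ Y ω ^ 4} := measure_mono hsub
    _ = ENNReal.ofReal (μ.real {ω | r ^ 4 ≤ Y ω ^ 4}) :=
        (ofReal_measureReal (measure_ne_top _ _)).symm
    _ ≤ _ := ENNReal.ofReal_le_ofReal <| by
      rw [le_div_iff₀ (by positivity)]
      linarith

variable {ι : Type*} [Fintype ι] {Z : ι → Ω → ℝ}

lemma measure_lt_abs_sum_mul_le (hZ : ∀ i, Measurable (Z i)) (hind : iIndepFun Z μ)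
    (hlaw : ∀ i, μ.map (Z i) = radMeasure) (a : ι → ℝ) {r : ℝ} (hr : 0 < r) :
    μ {ω | r < |∑ j, Z j ω * a j|} ≤ ENNReal.ofReal (3 * (∑ j, a j ^ 2) ^ 2 / r ^ 4) := by
  have hW : ∀ j, Measurable fun ω => Z j ω * a j := fun j => (hZ j).mul_const (a j)
  have hW2 : ∀ j, ∀ᵐ ω ∂μ, (Z j ω * a j) ^ 2 = a j ^ 2 := fun j =>
    (ae_sq_eq_one_of_map_eq_radMeasure (hZ j) (hlaw j)).mono fun ω h => by
      rw [mul_pow, h, one_mul]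
  have hW0 : ∀ j, ∫ ω, Z j ω * a j ∂μ = 0 := fun j => by
    rw [integral_mul_const, integral_eq_zero_of_map_eq_radMeasure (hZ j) (hlaw j), zero_mul]
  have hmoment := (integral_sum_sq_and_pow_four_le hW
    (hind.comp (fun j x => x * a j) fun j => measurable_mul_const (a j)) hW2 hW0 Finset.univ).2
  refine (measure_lt_abs_le_integral_pow_four ?_ hr).trans
    (ENNReal.ofReal_le_ofReal (div_le_div_of_nonneg_right hmoment (by positivity)))
  exact (memLp_top_pow (memLp_finsetSum _ fun j _ => memLp_top_of_ae_sq_eq (hW j) (hW2 j)) 4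
    ).integrable le_top

lemma measure_exists_lt_abs_sum_mul_le (hZ : ∀ i, Measurable (Z i)) (hind : iIndepFun Z μ)
    (hlaw : ∀ i, μ.map (Z i) = radMeasure) {κ : Type*} (s : Finset κ) (a : κ → ι → ℝ)
    {r : κ → ℝ} (hr : ∀ i ∈ s, 0 < r i) :
    μ {ω | ∃ i ∈ s, r i < |∑ j, Z j ω * a i j|}
      ≤ ENNReal.ofReal (∑ i ∈ s, 3 * (∑ j, a i j ^ 2) ^ 2 / r i ^ 4) := by
  rw [ENNReal.ofReal_sum_of_nonneg fun i _ => by positivity]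
  refine (measure_mono fun ω (⟨i, hi, h⟩ : ∃ i ∈ s, r i < |∑ j, Z j ω * a i j|) =>
    Set.mem_biUnion hi h).trans <|
    (measure_biUnion_finset_le s _).trans <| Finset.sum_le_sum fun i hi =>
      measure_lt_abs_sum_mul_le hZ hind hlaw (a i) (hr i hi)

lemma ofReal_one_sub_le_measure {δ : ℝ} (hδ : 0 ≤ δ) {s : Set Ω}
    (h : μ sᶜ ≤ ENNReal.ofReal δ) : ENNReal.ofReal (1 - δ) ≤ μ s := by
  rw [ENNReal.ofReal_sub _ hδ, ENNReal.ofReal_one, tsub_le_iff_right]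
  calc 1 = μ (s ∪ sᶜ) := by simp
    _ ≤ μ s + μ sᶜ := measure_union_le _ _
    _ ≤ μ s + ENNReal.ofReal δ := add_le_add le_rfl h

end Tail

section Stream

variable {n m : ℕ} (p : Fin m → Fin n)

lemma freq_nonneg (t : ℕ) (j : Fin n) : 0 ≤ freq p t j := Nat.cast_nonneg _

lemma freq_mono {s t : ℕ} (h : s ≤ t) (j : Fin n) : freq p s j ≤ freq p t j := by
  unfold freq
  gcongr with t' _

lemma freq_zero (j : Fin n) : freq p 0 j = 0 := by simp [freq]

lemma freq_succ {s : ℕ} (hs : s < m) (j : Fin n) :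
    freq p (s + 1) j = freq p s j + if p ⟨s, hs⟩ = j then 1 else 0 := by
  simp only [freq, Finset.card_filter, Nat.cast_sum, Nat.cast_ite, Nat.cast_one, Nat.cast_zero]
  have hlast : (if p ⟨s, hs⟩ = j then (1 : ℝ) else 0) =
      ∑ t' : Fin m, if t' = ⟨s, hs⟩ then (if p t' = j then 1 else 0) else 0 := by simp
  rw [hlast, ← Finset.sum_add_distrib]
  refine Finset.sum_congr rfl fun t' _ => ?_
  rcases lt_trichotomy (t' : ℕ) s with h | h | h
  · simp [h, h.trans (Nat.lt_succ_self s), Fin.ext_iff, h.ne]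
  · obtain rfl : t' = ⟨s, hs⟩ := Fin.ext h
    simp
  · simp [h.not_gt, Nat.lt_succ_iff.not.2 h.not_ge, Fin.ext_iff, h.ne']

noncomputable def freqNormSq (t : ℕ) : ℝ := ∑ j, freq p t j ^ 2

lemma freqNormSq_zero : freqNormSq p 0 = 0 := by simp [freqNormSq, freq_zero]

lemma freqNormSq_nonneg (t : ℕ) : 0 ≤ freqNormSq p t := by
  unfold freqNormSq
  positivity

lemma freqNormSq_mono {s t : ℕ} (h : s ≤ t) : freqNormSq p s ≤ freqNormSq p t :=
  Finset.sum_le_sum fun j _ => pow_le_pow_left₀ (freq_nonneg p s j) (freq_mono p h j) 2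

lemma sum_sq_freq_sub_le {s t : ℕ} (h : s ≤ t) :
    ∑ j, (freq p t j - freq p s j) ^ 2 ≤ freqNormSq p t - freqNormSq p s := by
  rw [freqNormSq, freqNormSq, ← Finset.sum_sub_distrib]
  exact Finset.sum_le_sum fun j _ => by nlinarith [freq_nonneg p s j, freq_mono p h j]

lemma sum_sq_freq_succ_sub {s : ℕ} (hs : s < m) :
    ∑ j, (freq p (s + 1) j - freq p s j) ^ 2 = 1 := by
  simp [freq_succ p hs]

lemma freqNormSq_succ {s : ℕ} (hs : s < m) :
    freqNormSq p (s + 1) = freqNormSq p s + 2 * freq p s (p ⟨s, hs⟩) + 1 := by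
  simp [freqNormSq, freq_succ p hs, add_sq, Finset.sum_add_distrib]

lemma freqNormSq_add_le {s t : ℕ} (hst : s ≤ t) (ht : t ≤ m) :
    freqNormSq p s + (t - s : ℕ) ≤ freqNormSq p t := by
  induction t, hst using Nat.le_induction with
  | base => simp
  | succ t hst ih =>
    have ht' : t < m := by omega
    push_cast [Nat.succ_sub hst, freqNormSq_succ p ht']
    linarith [ih ht'.le, freq_nonneg p t (p ⟨t, ht'⟩)]

lemma one_le_freqNormSq (hm : 0 < m) : 1 ≤ freqNormSq p m := by
  have h := freqNormSq_add_le p (Nat.zero_le m) le_rfl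
  rw [freqNormSq_zero, zero_add, Nat.sub_zero] at h
  exact le_trans (mod_cast hm) h

end Stream

section LastBelow

variable {n m : ℕ} (p : Fin m → Fin n)

/-- Junk value `0` when no time qualifies, i.e. when `θ ≤ 0`. -/
noncomputable def lastBelow (θ : ℝ) : ℕ := Nat.findGreatest (fun s => freqNormSq p s < θ) m

variable {p} {θ θ₀ θ₁ Δ : ℝ}

lemma lastBelow_le : lastBelow p θ ≤ m := Nat.findGreatest_le m

lemma freqNormSq_lastBelow_lt (hθ : 0 < θ) : freqNormSq p (lastBelow p θ) < θ :=
  Nat.findGreatest_spec (P := fun s => freqNormSq p s < θ) (Nat.zero_le m)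
    (by rwa [freqNormSq_zero])

lemma le_lastBelow {t : ℕ} (ht : t ≤ m) (h : freqNormSq p t < θ) : t ≤ lastBelow p θ :=
  Nat.le_findGreatest ht h

lemma le_freqNormSq_lastBelow_succ (h : lastBelow p θ < m) :
    θ ≤ freqNormSq p (lastBelow p θ + 1) :=
  not_lt.1 <| Nat.findGreatest_is_greatest (Nat.lt_succ_self _) h

lemma lastBelow_eq_of_lt_of_le {t : ℕ} (ht : t ≤ m) (h₁ : freqNormSq p t < θ)
    (h₂ : θ ≤ freqNormSq p t + 1) : lastBelow p θ = t := by
  refine le_antisymm ?_ (le_lastBelow ht h₁)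
  by_contra! hlt
  have := freqNormSq_add_le p hlt.le lastBelow_le
  have : (1 : ℝ) ≤ (lastBelow p θ - t : ℕ) := mod_cast Nat.le_sub_of_add_le' hlt
  linarith [freqNormSq_lastBelow_lt (p := p) (h₁.trans_le' (freqNormSq_nonneg p t))]

/-- Apart from the single arrival that crosses `θ₁`, the window between the two times has
`‖f‖₂²`-length below `Δ`. -/
lemma sum_sq_freq_lastBelow_sub_le (hθ₁ : 0 < θ₁) (h₁₀ : θ₁ ≤ θ₀) (h₀ : θ₀ ≤ θ₁ + Δ) :
    ∑ j, (freq p (lastBelow p θ₀) j - freq p (lastBelow p θ₁) j) ^ 2 ≤ 2 * Δ + 2 := by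
  set u := lastBelow p θ₁
  set v := lastBelow p θ₀
  have huv : u ≤ v := le_lastBelow lastBelow_le ((freqNormSq_lastBelow_lt hθ₁).trans_le h₁₀)
  rcases huv.eq_or_lt with heq | hlt
  · simp only [heq, sub_self, zero_pow two_ne_zero, Finset.sum_const_zero]
    linarith
  have hu : u < m := hlt.trans_le lastBelow_le
  have hcross := le_freqNormSq_lastBelow_succ hu
  have hfar := sum_sq_freq_sub_le p (show u + 1 ≤ v from hlt)
  have hv := freqNormSq_lastBelow_lt (p := p) (hθ₁.trans_le h₁₀)
  calc ∑ j, (freq p v j - freq p u j) ^ 2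
      ≤ ∑ j, (2 * (freq p v j - freq p (u + 1) j) ^ 2 +
          2 * (freq p (u + 1) j - freq p u j) ^ 2) :=
        Finset.sum_le_sum fun j _ => by
          nlinarith [sq_nonneg (freq p v j - 2 * freq p (u + 1) j + freq p u j)]
    _ = 2 * ∑ j, (freq p v j - freq p (u + 1) j) ^ 2 + 2 := by
        rw [Finset.sum_add_distrib, ← Finset.mul_sum, ← Finset.mul_sum,
          sum_sq_freq_succ_sub p hu, mul_one]
    _ ≤ 2 * Δ + 2 := by linarith

end LastBelow

section Chaining

variable {n m : ℕ} (p : Fin m → Fin n)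

/-- At level `k` the range `[0, ‖f^(m)‖₂²]` of the clock is cut into cells of width
`‖f^(m)‖₂² / 2 ^ k`; `t` is approximated by `node p k (cell p k t)`, the last time of its cell. -/
noncomputable def cell (k t : ℕ) : ℕ := ⌊freqNormSq p t / (freqNormSq p m / 2 ^ k)⌋₊

noncomputable def node (k c : ℕ) : ℕ := lastBelow p ((c + 1) * (freqNormSq p m / 2 ^ k))

/-- The link `⟨k, c⟩` joins `node p (k + 1) c` to its parent `node p k (c / 2)`. Only
`c ≤ 2 ^ (k + 1)` is needed; the spare indices make the count a power of two. -/
def links (K : ℕ) : Finset (Σ _ : ℕ, ℕ) :=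
  (Finset.range K).sigma fun k => Finset.range (2 ^ (k + 2))

noncomputable def linkIncrement (i : Σ _ : ℕ, ℕ) : Fin n → ℝ :=
  freq p (node p i.1 (i.2 / 2)) - freq p (node p (i.1 + 1) i.2)

variable {p} (hm : 0 < m)
include hm

lemma cell_le (k : ℕ) {t : ℕ} (ht : t ≤ m) : cell p k t ≤ 2 ^ k := by
  have hpos : 0 < freqNormSq p m := one_pos.trans_le (one_le_freqNormSq p hm)
  refine Nat.floor_le_of_le ?_
  rw [div_le_iff₀ (by positivity)]
  push_cast
  calc freqNormSq p t ≤ freqNormSq p m := freqNormSq_mono p ht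
    _ = 2 ^ k * (freqNormSq p m / 2 ^ k) := by field_simp

omit hm in
lemma cell_succ_div_two (k t : ℕ) : cell p (k + 1) t / 2 = cell p k t := by
  rw [cell, cell, ← Nat.floor_div_natCast, pow_succ]
  congr 1
  push_cast
  ring

lemma node_cell_eq_self {K : ℕ} (hK : freqNormSq p m / 2 ^ K ≤ 1) {t : ℕ} (ht : t ≤ m) :
    node p K (cell p K t) = t := by
  have hΔ : 0 < freqNormSq p m / 2 ^ K :=
    div_pos (one_pos.trans_le (one_le_freqNormSq p hm)) (by positivity)
  have hfloor := Nat.floor_le (div_nonneg (freqNormSq_nonneg p t) hΔ.le)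
  have hlt := Nat.lt_floor_add_one (freqNormSq p t / (freqNormSq p m / 2 ^ K))
  rw [le_div_iff₀ hΔ] at hfloor
  rw [div_lt_iff₀ hΔ] at hlt
  refine lastBelow_eq_of_lt_of_le ht hlt ?_
  rw [cell]
  nlinarith

lemma sum_sq_linkIncrement_le (i : Σ _ : ℕ, ℕ) :
    ∑ j, linkIncrement p i j ^ 2 ≤ 2 * (freqNormSq p m / 2 ^ (i.1 + 1)) + 2 := by
  obtain ⟨k, c⟩ := i
  have hΔ : 0 < freqNormSq p m / 2 ^ (k + 1) :=
    div_pos (one_pos.trans_le (one_le_freqNormSq p hm)) (by positivity)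
  have hsplit : freqNormSq p m / 2 ^ k = 2 * (freqNormSq p m / 2 ^ (k + 1)) := by
    rw [pow_succ]; field_simp
  have hc : (c : ℝ) + 1 ≤ 2 * ((c / 2 : ℕ) : ℝ) + 2 :=
    mod_cast (by omega : c + 1 ≤ 2 * (c / 2) + 2)
  have hc' : 2 * ((c / 2 : ℕ) : ℝ) + 2 ≤ c + 2 :=
    mod_cast (by omega : 2 * (c / 2) + 2 ≤ c + 2)
  simp only [linkIncrement, Pi.sub_apply, node]
  apply sum_sq_freq_lastBelow_sub_le (by positivity) <;> rw [hsplit] <;> nlinarith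

/-- `t` is reached from a level-`0` node through one link per level, and at level `K` the
node of `t` is `t` itself. -/
lemma abs_le_of_chain {K : ℕ} (hK : freqNormSq p m / 2 ^ K ≤ 1) (x : ℕ → ℝ) {a : ℝ}
    {b : ℕ → ℝ} (h₀ : ∀ c ∈ Finset.range 2, |x (node p 0 c)| ≤ a)
    (hlink : ∀ i ∈ links K, |x (node p i.1 (i.2 / 2)) - x (node p (i.1 + 1) i.2)| ≤ b i.1)
    {t : ℕ} (ht : t ≤ m) : |x t| ≤ a + ∑ k ∈ Finset.range K, b k := by
  set g : ℕ → ℝ := fun k => x (node p k (cell p k t))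
  have htel : x t = g 0 + ∑ k ∈ Finset.range K, (g (k + 1) - g k) := by
    rw [Finset.sum_range_sub, add_sub_cancel]
    exact congrArg x (node_cell_eq_self hm hK ht).symm
  have hlink' : ∀ k ∈ Finset.range K, |g (k + 1) - g k| ≤ b k := fun k hk => by
    have hc : cell p (k + 1) t < 2 ^ (k + 2) :=
      (cell_le hm (k + 1) ht).trans_lt (Nat.pow_lt_pow_right one_lt_two (Nat.lt_succ_self _))
    simpa only [g, abs_sub_comm, cell_succ_div_two] using
      hlink ⟨k, cell p (k + 1) t⟩ (Finset.mem_sigma.2 ⟨hk, Finset.mem_range.2 hc⟩)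
  calc |x t| ≤ |g 0| + ∑ k ∈ Finset.range K, |g (k + 1) - g k| := by
        rw [htel]
        exact (abs_add_le _ _).trans (add_le_add le_rfl (Finset.abs_sum_le_sum_abs _ _))
    _ ≤ a + ∑ k ∈ Finset.range K, b k :=
        add_le_add (h₀ _ (Finset.mem_range.2 ((cell_le hm 0 ht).trans_lt one_lt_two)))
          (Finset.sum_le_sum hlink')

end Chaining

section Tameness

lemma sum_link_budget_le (S : ℝ) {R : ℝ} (hR : 0 < R) (K : ℕ) :
    ∑ k ∈ Finset.range K,
        2 ^ (k + 2) * (3 * (6 * (S / 2 ^ (k + 1))) ^ 2 / (R / 16 * (7 / 8) ^ k) ^ 4)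
      ≤ 49545216 * (S ^ 2 / R ^ 4) := by
  have hterm : ∀ k : ℕ,
      (2 : ℝ) ^ (k + 2) * (3 * (6 * (S / 2 ^ (k + 1))) ^ 2 / (R / 16 * (7 / 8) ^ k) ^ 4)
        = 7077888 * (S ^ 2 / R ^ 4) * (2048 / 2401) ^ k := fun k => by
    have h : ((7 / 8 : ℝ) ^ k) ^ 4 * 2 ^ k * (2048 / 2401) ^ k = 1 := by
      rw [← pow_mul, mul_comm k 4, pow_mul, ← mul_pow, ← mul_pow]
      norm_num
    field_simp
    linear_combination (-28311552 * S ^ 2 * 2 ^ k) * h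
  have hgeom := geom_sum_Ico_le_of_lt_one (m := 0) (n := K) (x := (2048 / 2401 : ℝ))
    (by norm_num) (by norm_num)
  norm_num [← Finset.range_eq_Ico] at hgeom
  rw [Finset.sum_congr rfl fun k _ => hterm k, ← Finset.mul_sum]
  nlinarith [show 0 ≤ S ^ 2 / R ^ 4 by positivity]

variable {n m : ℕ} {p : Fin m → Fin n} {Ω : Type*} {Z : Fin n → Ω → ℝ}

/-- The thresholds are chosen so that `R / 2 + ∑ₖ R / 16 * (7 / 8) ^ k ≤ R`. -/
def LinksBounded (Z : Fin n → Ω → ℝ) (p : Fin m → Fin n) (K : ℕ) (R : ℝ) (ω : Ω) : Prop :=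
  (∀ c ∈ Finset.range 2, |∑ j, Z j ω * freq p (node p 0 c) j| ≤ R / 2) ∧
    ∀ i ∈ links K, |∑ j, Z j ω * linkIncrement p i j| ≤ R / 16 * (7 / 8) ^ i.1

lemma abs_sum_le_of_linksBounded (hm : 0 < m) {K : ℕ} (hK : freqNormSq p m / 2 ^ K ≤ 1)
    {R : ℝ} (hR : 0 ≤ R) {ω : Ω} (hω : LinksBounded Z p K R ω) {t : ℕ} (ht : t ≤ m) :
    |∑ j, Z j ω * freq p t j| ≤ R := by
  have hgeom := geom_sum_Ico_le_of_lt_one (m := 0) (n := K) (x := (7 / 8 : ℝ)) (by norm_num)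
    (by norm_num)
  norm_num [← Finset.range_eq_Ico] at hgeom
  calc |∑ j, Z j ω * freq p t j|
      ≤ R / 2 + ∑ k ∈ Finset.range K, R / 16 * (7 / 8) ^ k :=
        abs_le_of_chain hm hK (fun t => ∑ j, Z j ω * freq p t j) hω.1 (fun i hi => by
          simpa only [linkIncrement, Pi.sub_apply, mul_sub, Finset.sum_sub_distrib]
            using hω.2 i hi) ht
    _ ≤ R := by
        rw [← Finset.mul_sum]
        nlinarith

lemma sum_anchor_moment_le {R : ℝ} (hR : 0 < R) :
    ∑ c ∈ Finset.range 2, 3 * (∑ j, freq p (node p 0 c) j ^ 2) ^ 2 / (R / 2) ^ 4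
      ≤ 96 * (freqNormSq p m ^ 2 / R ^ 4) := by
  calc _ ≤ ∑ c ∈ Finset.range 2, 3 * freqNormSq p m ^ 2 / (R / 2) ^ 4 :=
        Finset.sum_le_sum fun c _ => by
          gcongr
          exact freqNormSq_mono p lastBelow_le
    _ = 96 * (freqNormSq p m ^ 2 / R ^ 4) := by
        simp only [Finset.sum_const, Finset.card_range, nsmul_eq_mul]
        field_simp
        ring

lemma sum_link_moment_le (hm : 0 < m) {K : ℕ} (hK : 2 ^ K ≤ 2 * freqNormSq p m) {R : ℝ}
    (hR : 0 < R) :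
    ∑ i ∈ links K, 3 * (∑ j, linkIncrement p i j ^ 2) ^ 2 / (R / 16 * (7 / 8) ^ i.1) ^ 4
      ≤ 49545216 * (freqNormSq p m ^ 2 / R ^ 4) := by
  set S := freqNormSq p m
  have hlink : ∀ i ∈ links K, ∑ j, linkIncrement p i j ^ 2 ≤ 6 * (S / 2 ^ (i.1 + 1)) :=
    fun i hi => by
      have h2 : (2 : ℝ) ^ (i.1 + 1) ≤ 2 ^ K :=
        pow_le_pow_right₀ one_le_two (Finset.mem_range.1 (Finset.mem_sigma.1 hi).1)
      have : 1 / 2 ≤ S / 2 ^ (i.1 + 1) := by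
        rw [div_le_div_iff₀ two_pos (by positivity)]
        linarith
      linarith [sum_sq_linkIncrement_le (p := p) hm i]
  calc _ ≤ ∑ i ∈ links K, 3 * (6 * (S / 2 ^ (i.1 + 1))) ^ 2 / (R / 16 * (7 / 8) ^ i.1) ^ 4 :=
        Finset.sum_le_sum fun i hi => by
          gcongr
          exact hlink i hi
    _ = ∑ k ∈ Finset.range K,
          2 ^ (k + 2) * (3 * (6 * (S / 2 ^ (k + 1))) ^ 2 / (R / 16 * (7 / 8) ^ k) ^ 4) := by
        simp only [links, Finset.sum_sigma, Finset.sum_const, Finset.card_range, nsmul_eq_mul]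
        push_cast
        rfl
    _ ≤ 49545216 * (S ^ 2 / R ^ 4) := sum_link_budget_le S hR K

variable [MeasurableSpace Ω] {μ : Measure Ω} [IsProbabilityMeasure μ]

lemma measure_not_linksBounded_le (hm : 0 < m) (hZ : ∀ i, Measurable (Z i))
    (hind : iIndepFun Z μ) (hlaw : ∀ i, μ.map (Z i) = radMeasure) {K : ℕ}
    (hK : 2 ^ K ≤ 2 * freqNormSq p m) {R : ℝ} (hR : 0 < R) :
    μ {ω | ¬ LinksBounded Z p K R ω} ≤
      ENNReal.ofReal (5 * 10 ^ 7 * (freqNormSq p m ^ 2 / R ^ 4)) := by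
  have hA := measure_exists_lt_abs_sum_mul_le hZ hind hlaw (Finset.range 2)
    (fun c => freq p (node p 0 c)) (r := fun _ => R / 2) fun _ _ => by positivity
  have hB := measure_exists_lt_abs_sum_mul_le hZ hind hlaw (links K) (linkIncrement p)
    (r := fun i => R / 16 * (7 / 8) ^ i.1) fun _ _ => by positivity
  have hsub : {ω | ¬ LinksBounded Z p K R ω} ⊆
      {ω | ∃ c ∈ Finset.range 2, R / 2 < |∑ j, Z j ω * freq p (node p 0 c) j|} ∪
        {ω | ∃ i ∈ links K, R / 16 * (7 / 8) ^ i.1 < |∑ j, Z j ω * linkIncrement p i j|} :=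
    fun ω (hω : ¬ LinksBounded Z p K R ω) => by
      simp only [LinksBounded, not_and_or, not_forall, not_le, exists_prop] at hω
      exact hω
  calc μ {ω | ¬ LinksBounded Z p K R ω}
      ≤ ENNReal.ofReal (96 * (freqNormSq p m ^ 2 / R ^ 4)) +
          ENNReal.ofReal (49545216 * (freqNormSq p m ^ 2 / R ^ 4)) :=
        (measure_mono hsub).trans <| (measure_union_le _ _).trans <| add_le_add
          (hA.trans (ENNReal.ofReal_le_ofReal (sum_anchor_moment_le hR)))
          (hB.trans (ENNReal.ofReal_le_ofReal (sum_link_moment_le hm hK hR)))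
    _ ≤ ENNReal.ofReal (5 * 10 ^ 7 * (freqNormSq p m ^ 2 / R ^ 4)) := by
        rw [← ENNReal.ofReal_add (by positivity) (by positivity)]
        exact ENNReal.ofReal_le_ofReal
          (by nlinarith [show 0 ≤ freqNormSq p m ^ 2 / R ^ 4 by positivity])

end Tameness

/-- **Tameness of the Bernoulli process (BP correctness).** There is a universal constant
`C' > 0` such that for any insertion-only stream with frequency vectors `f^(t)`, any
`δ ∈ (0,1)` and i.i.d. Rademacher variables `Z_j`, with probability at least `1 − δ`
the process `X_t = ∑_j Z_j f_j^(t)` satisfies `|X_t| ≤ (C'/δ) ‖f^(m)‖₂` for all `t ∈ [m]`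
simultaneously. -/
theorem bernoulli_process_tame :
    ∃ C' : ℝ, 0 < C' ∧
      ∀ (n m : ℕ), 0 < m →
      ∀ (p : Fin m → Fin n) (δ : ℝ), 0 < δ → δ < 1 →
      ∀ (Ω : Type) [MeasurableSpace Ω] (μ : Measure Ω) [IsProbabilityMeasure μ]
        (Z : Fin n → Ω → ℝ),
        (∀ i, Measurable (Z i)) →
        iIndepFun Z μ →
        (∀ i, Measure.map (Z i) μ = radMeasure) →
        ENNReal.ofReal (1 - δ) ≤
          μ {ω | ∀ t : Fin m,
              |∑ j, Z j ω * freq p ((t : ℕ) + 1) j| ≤ (C' / δ) * l2norm (freq p m)} := by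
  refine ⟨100, by norm_num, fun n m hm p δ hδ0 hδ1 Ω _ μ _ Z hZ hind hlaw => ?_⟩
  set S := freqNormSq p m
  have hS : 1 ≤ S := one_le_freqNormSq p hm
  have hσ : l2norm (freq p m) ^ 2 = S := Real.sq_sqrt (by positivity)
  have hσ0 : 0 < l2norm (freq p m) := Real.sqrt_pos.2 (by positivity)
  obtain ⟨K, hKS, hSK⟩ := exists_nat_pow_near hS one_lt_two
  set R := 100 / δ * l2norm (freq p m) with hRdef
  have hR : 0 < R := by positivity
  have hρ : S ^ 2 / R ^ 4 = δ ^ 4 / 10 ^ 8 := by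
    rw [← hσ, hRdef]
    field_simp
    ring
  have hgood : {ω | ∀ t : Fin m, |∑ j, Z j ω * freq p ((t : ℕ) + 1) j| ≤ R}ᶜ ⊆
      {ω | ¬ LinksBounded Z p (K + 1) R ω} := fun ω hω hlinks => hω fun t =>
    abs_sum_le_of_linksBounded hm (div_le_one_of_le₀ hSK.le (by positivity)) hR.le hlinks
      (by omega)
  refine ofReal_one_sub_le_measure hδ0.le <| (measure_mono hgood).trans <|
    (measure_not_linksBounded_le hm hZ hind hlaw (by rw [pow_succ]; linarith) hR).trans <|
      ENNReal.ofReal_le_ofReal ?_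
  rw [hρ]
  nlinarith [pow_le_one₀ hδ0.le hδ1.le (n := 3)]
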